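/- The number of RGFs of length n with maximal letter k that avoid the pattern 1/2/3 is 1 if k = 1, equals 2^{n-1} − 1 if k = 2 (namely all words of 1s and 2s starting with 1 and containing at least one 2), and is 0 if k > 2. -/

import Mathlib

/-- The list of distinct letters of `u` in order of first occurrence. -/
def distinctsAux (u : List ℕ) : List ℕ :=
  u.foldl (fun acc x => if x ∈ acc then acc else acc ++ [x]) []

/-- The standardization of a word: relabel letters by order of first occurrence,
starting from `1`.  This is the restricted growth function of the set partition
determined by letter-equality, with blocks ordered by minima. -/
def stdWord (u : List ℕ) : List ℕ :=
  u.map (fun x => (distinctsAux u).idxOf x + 1)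

/-- `w` is a restricted growth function: each letter is a positive integer,
the first letter is `1`, and every letter is at most one more than the maximum
of the preceding letters. -/
def IsRGF (w : List ℕ) : Prop :=
  ∀ i : ℕ, ∀ h : i < w.length,
    1 ≤ w.get ⟨i, h⟩ ∧ w.get ⟨i, h⟩ ≤ ((w.take i).foldr max 0) + 1

/-- `w` avoids the pattern (RGF word) `v`: no subsequence of `w` standardizes to `v`.
This encodes set-partition pattern avoidance via the bijection with RGFs. -/
def AvoidsPat (w v : List ℕ) : Prop :=
  ¬ ∃ s : List ℕ, s.Sublist w ∧ stdWord s = v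

/-!
An RGF with maximal letter `m` contains `1, 2, …, m` as a subsequence (the first occurrences of
its letters), so it contains `1/2/3` once `m ≥ 3`; a word with at most two distinct letters has
no subsequence standardizing to `1/2/3`. Hence the `1/2/3`-avoiding RGFs of length `n` are the
words `1 t` with `t ∈ {1, 2}ⁿ⁻¹`, and the maximal letter is `1` only for `t = 1ⁿ⁻¹`.
-/

open List

lemma foldr_max_append_singleton (w : List ℕ) (x : ℕ) :
    (w ++ [x]).foldr max 0 = max (w.foldr max 0) x := by
  induction w with
  | nil => simp
  | cons a w ih => simp [ih, max_assoc]

section AppendIfNew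

variable {α : Type*} [DecidableEq α]

lemma mem_foldl_appendIfNew {u acc : List α} {x : α} :
    x ∈ u.foldl (fun acc x => if x ∈ acc then acc else acc ++ [x]) acc ↔ x ∈ acc ∨ x ∈ u := by
  induction u generalizing acc with
  | nil => simp
  | cons a u ih =>
    simp only [foldl_cons, ih, mem_cons]
    split_ifs <;> grind

lemma nodup_foldl_appendIfNew {u acc : List α} (h : acc.Nodup) :
    (u.foldl (fun acc x => if x ∈ acc then acc else acc ++ [x]) acc).Nodup := by
  induction u generalizing acc with
  | nil => exact h
  | cons a u ih =>
    simp only [foldl_cons]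
    split_ifs with ha
    · exact ih h
    · exact ih (concat_eq_append ▸ h.concat ha)

end AppendIfNew

lemma mem_distinctsAux {u : List ℕ} {x : ℕ} : x ∈ distinctsAux u ↔ x ∈ u := by
  simp [distinctsAux, mem_foldl_appendIfNew]

lemma nodup_distinctsAux (u : List ℕ) : (distinctsAux u).Nodup :=
  nodup_foldl_appendIfNew nodup_nil

lemma length_distinctsAux (u : List ℕ) : (distinctsAux u).length = u.toFinset.card := by
  rw [← toFinset_card_of_nodup (nodup_distinctsAux u)]
  congr 1
  ext x
  simp [mem_distinctsAux]

lemma le_card_toFinset_of_mem_stdWord {u : List ℕ} {y : ℕ} (hy : y ∈ stdWord u) :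
    y ≤ u.toFinset.card := by
  obtain ⟨x, hx, rfl⟩ := mem_map.1 hy
  have := idxOf_lt_length_of_mem (mem_distinctsAux.2 hx)
  rw [length_distinctsAux] at this
  omega

lemma avoidsPat_of_card_toFinset_lt {w v : List ℕ} {m : ℕ} (hm : m ∈ v)
    (hw : w.toFinset.card < m) : AvoidsPat w v := by
  rintro ⟨s, hs, rfl⟩
  have hsw := Finset.card_le_card fun x hx => mem_toFinset.2 (hs.subset (mem_toFinset.1 hx))
  have := le_card_toFinset_of_mem_stdWord hm
  omega

namespace IsRGF

variable {w : List ℕ}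

lemma one_le_of_mem (hw : IsRGF w) {x : ℕ} (hx : x ∈ w) : 1 ≤ x := by
  obtain ⟨i, hi, rfl⟩ := mem_iff_getElem.1 hx
  exact (hw i hi).1

lemma of_append_singleton {x : ℕ} (h : IsRGF (w ++ [x])) : IsRGF w ∧ x ≤ w.foldr max 0 + 1 := by
  refine ⟨fun i hi => ?_, by simpa using (h w.length (by simp)).2⟩
  simpa [getElem_append_left hi, take_append_of_le_length hi.le] using h i (by simp; omega)

lemma range'_sublist (hw : IsRGF w) : (range' 1 (w.foldr max 0)).Sublist w := by
  induction w using reverseRecOn with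
  | nil => simp
  | append_singleton w x ih =>
    obtain ⟨hw', hx⟩ := hw.of_append_singleton
    rw [foldr_max_append_singleton]
    rcases hx.lt_or_eq with hlt | rfl
    · rw [max_eq_left (by omega)]
      exact (ih hw').trans (sublist_append_left _ _)
    · rw [max_eq_right (by omega), range'_concat]
      simpa [add_comm] using (ih hw').append_right [w.foldr max 0 + 1]

lemma avoidsPat_123_iff (hw : IsRGF w) : AvoidsPat w [1, 2, 3] ↔ w.foldr max 0 ≤ 2 := by
  constructor
  · intro h
    by_contra! h3
    exact h ⟨[1, 2, 3], (range'_sublist_right.2 h3).trans hw.range'_sublist, by decide⟩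
  · intro h
    refine avoidsPat_of_card_toFinset_lt (m := 3) (by simp) ?_
    have hsub : w.toFinset ⊆ {1, 2} := fun x hx => by
      have h1 := hw.one_le_of_mem (mem_toFinset.1 hx)
      have h2 : x ≤ w.foldr max 0 := le_max_of_le (mem_toFinset.1 hx) le_rfl
      simp only [Finset.mem_insert, Finset.mem_singleton]
      omega
    exact (Finset.card_le_card hsub).trans_lt (by decide)

end IsRGF

def ofBools (b : List Bool) : List ℕ := 1 :: b.map (cond · 2 1)

lemma ofBools_injective : Function.Injective ofBools := fun b₁ b₂ h =>
  map_injective_iff.2 (by decide) (cons.inj h).2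

lemma length_ofBools (b : List Bool) : (ofBools b).length = b.length + 1 := by
  simp [ofBools]

lemma foldr_max_ofBools (b : List Bool) :
    (ofBools b).foldr max 0 = if true ∈ b then 2 else 1 := by
  induction b with
  | nil => rfl
  | cons c b ih =>
    simp only [ofBools, foldr_cons, map_cons, mem_cons] at ih ⊢
    cases c <;> split_ifs at ih ⊢ <;> simp_all <;> omega

lemma eq_one_or_eq_two_of_mem_ofBools {b : List Bool} {x : ℕ} (hx : x ∈ ofBools b) :
    x = 1 ∨ x = 2 := by
  simp only [ofBools, mem_cons, mem_map] at hx
  rcases hx with h | ⟨c, -, rfl⟩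
  · exact .inl h
  · cases c <;> simp

lemma isRGF_ofBools (b : List Bool) : IsRGF (ofBools b) := by
  intro i hi
  have := eq_one_or_eq_two_of_mem_ofBools (get_mem (ofBools b) ⟨i, hi⟩)
  cases i with
  | zero => simp [ofBools]
  | succ j =>
    have : 1 ≤ ((ofBools b).take (j + 1)).foldr max 0 :=
      le_max_of_le (by simp [ofBools]) le_rfl
    omega

lemma IsRGF.exists_ofBools_eq {w : List ℕ} (hw : IsRGF w) (hne : w ≠ [])
    (h2 : w.foldr max 0 ≤ 2) : ∃ b, ofBools b = w := by
  obtain ⟨a, t, rfl⟩ := exists_cons_of_ne_nil hne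
  obtain rfl : a = 1 := by have := hw 0 (by simp); simp at this; omega
  refine ⟨t.map (· = 2), ?_⟩
  simp only [ofBools, map_map, cons.injEq, true_and]
  refine (map_congr_left fun x hx => ?_).trans (map_id t)
  have h1 := hw.one_le_of_mem (mem_cons_of_mem 1 hx)
  have hx2 : x ≤ 2 := (le_max_of_le (mem_cons_of_mem 1 hx) le_rfl).trans h2
  rcases (by omega : x = 1 ∨ x = 2) with rfl | rfl <;> rfl

lemma setOf_avoids123_eq_image_ofBools {n : ℕ} (hn : 1 ≤ n) (k : ℕ) :
    {w : List ℕ | IsRGF w ∧ w.length = n ∧ w.foldr max 0 = k ∧ AvoidsPat w [1, 2, 3]} =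
      ofBools '' {b | b.length = n - 1 ∧ (if true ∈ b then 2 else 1) = k} := by
  ext w
  constructor
  · rintro ⟨hw, rfl, rfl, hav⟩
    obtain ⟨b, rfl⟩ := hw.exists_ofBools_eq (ne_nil_of_length_pos hn) (hw.avoidsPat_123_iff.1 hav)
    exact ⟨b, ⟨by simp [length_ofBools], (foldr_max_ofBools b).symm⟩, rfl⟩
  · rintro ⟨b, ⟨hb, rfl⟩, rfl⟩
    refine ⟨isRGF_ofBools b, by rw [length_ofBools]; omega, foldr_max_ofBools b, ?_⟩
    rw [(isRGF_ofBools b).avoidsPat_123_iff, foldr_max_ofBools]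
    split_ifs <;> omega

lemma ncard_setOf_length_eq (α : Type*) [Fintype α] (m : ℕ) :
    {l : List α | l.length = m}.ncard = Fintype.card α ^ m := by
  calc _ = Nat.card (List.Vector α m) := (Nat.card_coe_set_eq _).symm
    _ = _ := by rw [Nat.card_eq_fintype_card, card_vector]

lemma eq_replicate_false_iff {b : List Bool} {m : ℕ} :
    b = replicate m false ↔ b.length = m ∧ true ∉ b := by
  simp [eq_replicate_iff]

/-- Counting RGFs of length $n$ with maximal letter $k$ avoiding $1/2/3$:
there is $1$ for $k = 1$, $2^{n-1} - 1$ for $k = 2$, and none for $k > 2$. -/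
theorem stmt8 (n : ℕ) (hn : 1 ≤ n) :
    Set.ncard {w : List ℕ | IsRGF w ∧ w.length = n ∧ w.foldr max 0 = 1 ∧
        AvoidsPat w [1, 2, 3]} = 1 ∧
    Set.ncard {w : List ℕ | IsRGF w ∧ w.length = n ∧ w.foldr max 0 = 2 ∧
        AvoidsPat w [1, 2, 3]} = 2 ^ (n - 1) - 1 ∧
    ∀ k : ℕ, 2 < k →
      Set.ncard {w : List ℕ | IsRGF w ∧ w.length = n ∧ w.foldr max 0 = k ∧
        AvoidsPat w [1, 2, 3]} = 0 := by
  simp only [setOf_avoids123_eq_image_ofBools hn, Set.ncard_image_of_injective _ ofBools_injective]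
  refine ⟨?_, ?_, fun k hk => ?_⟩
  · have : {b : List Bool | b.length = n - 1 ∧ (if true ∈ b then 2 else 1) = 1} =
        {replicate (n - 1) false} := by
      ext b
      simp [eq_replicate_false_iff]
    rw [this, Set.ncard_singleton]
  · have : {b : List Bool | b.length = n - 1 ∧ (if true ∈ b then 2 else 1) = 2} =
        {b | b.length = n - 1} \ {replicate (n - 1) false} := by
      ext b
      by_cases hb : true ∈ b <;> simp [hb, eq_replicate_false_iff]
    rw [this, Set.ncard_sdiff_singleton_of_mem (by simp), ncard_setOf_length_eq, Fintype.card_bool]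
  · convert Set.ncard_empty (List Bool)
    ext b
    simp only [Set.mem_ofPred_eq, Set.mem_empty_iff_false, iff_false, not_and]
    split_ifs <;> omega
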